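/- Let G be a simple graph on a countable vertex set. Suppose I1 is an independent subgraph of G, and I2 is a set of vertices disjoint from I1 that is an independent subgraph of the induced subgraph G[V \ I1]. Then I1 ∪ I2 is an independent subgraph of G. -/

import Mathlib

namespace PaperMatchings

variable {V : Type*}

/-- The support of a set of edges: all vertices incident to some edge in `M`. -/
def supp (M : Set (Sym2 V)) : Set V := {v | ∃ e ∈ M, v ∈ e}

/-- `M` is a matching of `G`: a set of edges of `G` such that no vertex is
incident to more than one edge of `M`. -/
def IsMatching (G : SimpleGraph V) (M : Set (Sym2 V)) : Prop :=
  M ⊆ G.edgeSet ∧ ∀ (v : V), ∀ e ∈ M, ∀ e' ∈ M, v ∈ e → v ∈ e' → e = e'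

/-- A perfect matching: a matching whose support is all of `V`. -/
def IsPerfectMatching (G : SimpleGraph V) (M : Set (Sym2 V)) : Prop :=
  IsMatching G M ∧ supp M = Set.univ

/-- A (finite or infinite) path in `G`, given by its number of vertices `n : ℕ∞`
(`⊤` meaning infinite) and the enumeration `f` of its vertices: it is injective on
indices below `n` and consecutive vertices are adjacent. -/
def IsPath (G : SimpleGraph V) (n : ℕ∞) (f : ℕ → V) : Prop :=
  1 ≤ n ∧
  (∀ i j : ℕ, (i : ℕ∞) < n → (j : ℕ∞) < n → f i = f j → i = j) ∧
  (∀ i : ℕ, ((i : ℕ∞) + 1) < n → G.Adj (f i) (f (i + 1)))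

/-- The consecutive edges of the path lie alternately in `M` and outside `M`. -/
def IsAlternating (M : Set (Sym2 V)) (n : ℕ∞) (f : ℕ → V) : Prop :=
  ∀ i : ℕ, ((i : ℕ∞) + 2) < n →
    (s(f i, f (i + 1)) ∈ M ↔ s(f (i + 1), f (i + 2)) ∉ M)

/-- An `M`-augmenting path starting at `s`: an `M`-alternating path (with at least one
edge) starting at the unmatched vertex `s`, which is either infinite or ends at an
unmatched vertex. -/
def IsAugmentingPath (G : SimpleGraph V) (M : Set (Sym2 V)) (n : ℕ∞) (f : ℕ → V)
    (s : V) : Prop :=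
  IsPath G n f ∧ IsAlternating M n f ∧ 1 < n ∧ f 0 = s ∧ s ∉ supp M ∧
  ∀ k : ℕ, n = (k : ℕ∞) + 1 → f k ∉ supp M

/-- The path contains at least one edge of `M`. -/
def IsProper (M : Set (Sym2 V)) (n : ℕ∞) (f : ℕ → V) : Prop :=
  ∃ i : ℕ, ((i : ℕ∞) + 1) < n ∧ s(f i, f (i + 1)) ∈ M

/-- Condition (A): for every matching `M` and every vertex `s` not in the support
of `M` there is an `M`-augmenting path starting at `s`. -/
def ConditionA (G : SimpleGraph V) : Prop :=
  ∀ M : Set (Sym2 V), IsMatching G M → ∀ s : V, s ∉ supp M →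
    ∃ (n : ℕ∞) (f : ℕ → V), IsAugmentingPath G M n f s

/-- An independent matching: a matching admitting no proper augmenting path. -/
def IndepMatching (G : SimpleGraph V) (M : Set (Sym2 V)) : Prop :=
  IsMatching G M ∧
    ¬ ∃ (s : V) (n : ℕ∞) (f : ℕ → V), IsAugmentingPath G M n f s ∧ IsProper M n f

/-- The induced subgraph of `G` on the vertex set `S` (vertices outside `S`
become isolated). -/
def restrict (G : SimpleGraph V) (S : Set V) : SimpleGraph V where
  Adj u v := G.Adj u v ∧ u ∈ S ∧ v ∈ S
  symm := by
    constructor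
    intro u v h
    exact ⟨h.1.symm, h.2.2, h.2.1⟩
  loopless := by
    constructor
    intro v h
    exact G.irrefl h.1

/-- `W` is an independent subgraph of `G`: the induced subgraph `G[W]` has a perfect
matching (i.e. `G` has a matching with support exactly `W`) and every such matching
is an independent matching of `G`. -/
def IndepSubgraph (G : SimpleGraph V) (W : Set V) : Prop :=
  (∃ M, IsMatching G M ∧ supp M = W) ∧
  ∀ M, IsMatching G M → supp M = W → IndepMatching G M

/-- The induced subgraph `G[W]` satisfies condition (A): for every matching of
`G[W]` and every vertex of `W` not in its support, there is an augmenting path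
inside `G[W]`. -/
def ConditionAOn (G : SimpleGraph V) (W : Set V) : Prop :=
  ∀ M : Set (Sym2 V), IsMatching (restrict G W) M → ∀ s ∈ W, s ∉ supp M →
    ∃ (n : ℕ∞) (f : ℕ → V), IsAugmentingPath (restrict G W) M n f s


/-!
Whether a matching has a proper augmenting path depends only on its support. Augmenting `M`
along a proper augmenting path from `s` gives a matching `N` that covers `supp M` and matches `s`
to a vertex of `supp M`; for any matching `M'` with `supp M' = supp M`, the walk from `s`
alternating between `N`- and `M'`-edges is a path (both are matchings) which can only stop at an
`M'`-unmatched vertex, so it is a proper `M'`-augmenting path.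

It therefore suffices to rule out a proper augmenting path for `M₁ ∪ M₂`, where `M₁`, `M₂`
are perfect matchings of `G[I1]` and `G[I2]`. If the path avoids `I1` it is a proper
`M₂`-augmenting path of `G[V \ I1]`. Otherwise it enters `I1` along an edge outside
`M₁ ∪ M₂`, and the stretch from the vertex before that entry up to the first vertex leaving
`I1` again is a proper `M₁`-augmenting path of `G`.
-/

section Matching

variable {G : SimpleGraph V} {A B : Set (Sym2 V)} {S : Set V} {v w w' : V}

lemma mem_supp_iff : v ∈ supp A ↔ ∃ w, s(v, w) ∈ A := by
  constructor
  · rintro ⟨e, he, hv⟩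
    exact ⟨Sym2.Mem.other hv, by rwa [Sym2.other_spec hv]⟩
  · rintro ⟨w, hw⟩
    exact ⟨_, hw, Sym2.mem_mk_left _ _⟩

lemma left_mem_supp (h : s(v, w) ∈ A) : v ∈ supp A := ⟨_, h, Sym2.mem_mk_left _ _⟩

lemma right_mem_supp (h : s(v, w) ∈ A) : w ∈ supp A := ⟨_, h, Sym2.mem_mk_right _ _⟩

lemma supp_mono (h : A ⊆ B) : supp A ⊆ supp B := fun _ ⟨e, he, hv⟩ => ⟨e, h he, hv⟩

lemma supp_union : supp (A ∪ B) = supp A ∪ supp B := by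
  ext v
  simp only [supp, Set.mem_union, Set.mem_ofPred_eq, or_and_right, exists_or]

lemma IsMatching.eq_of_mem (hA : IsMatching G A) (h : s(v, w) ∈ A) (h' : s(v, w') ∈ A) :
    w = w' :=
  Sym2.congr_right.mp (hA.2 v _ h _ h' (Sym2.mem_mk_left _ _) (Sym2.mem_mk_left _ _))

lemma IsMatching.adj (hA : IsMatching G A) (h : s(v, w) ∈ A) : G.Adj v w := hA.1 h

noncomputable def partner (A : Set (Sym2 V)) (v : V) : V :=
  @Classical.epsilon V ⟨v⟩ fun w => s(v, w) ∈ A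

lemma partner_mem (h : v ∈ supp A) : s(v, partner A v) ∈ A :=
  Classical.epsilon_spec (mem_supp_iff.mp h)

lemma IsMatching.partner_eq (hA : IsMatching G A) (h : s(v, w) ∈ A) : partner A v = w :=
  hA.eq_of_mem (partner_mem (left_mem_supp h)) h

lemma IsMatching.supp_subset_of_restrict (hA : IsMatching (restrict G S) A) : supp A ⊆ S := by
  rintro v ⟨e, he, hv⟩
  induction e using Sym2.ind with
  | _ a b =>
    obtain ⟨-, ha, hb⟩ := hA.adj he
    rcases Sym2.mem_iff.mp hv with rfl | rfl
    exacts [ha, hb]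

lemma IsMatching.of_restrict (hA : IsMatching (restrict G S) A) : IsMatching G A := by
  refine ⟨fun e he => ?_, hA.2⟩
  induction e using Sym2.ind with
  | _ a b => exact (hA.adj he).1

lemma IsMatching.union_of_restrict (hA : IsMatching G A)
    (hB : IsMatching (restrict G (supp A)ᶜ) B) : IsMatching G (A ∪ B) := by
  have hBA : ∀ e ∈ B, ∀ v ∈ e, v ∉ supp A := fun e he v hv =>
    hB.supp_subset_of_restrict ⟨e, he, hv⟩
  refine ⟨Set.union_subset hA.1 hB.of_restrict.1, ?_⟩
  rintro v e (he | he) e' (he' | he') hv hv'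
  · exact hA.2 v e he e' he' hv hv'
  · exact (hBA e' he' v hv' ⟨e, he, hv⟩).elim
  · exact (hBA e he v hv ⟨e', he', hv'⟩).elim
  · exact hB.2 v e he e' he' hv hv'

lemma mk_mem_union_iff (hB : IsMatching (restrict G (supp A)ᶜ) B)
    (h : v ∈ supp A ∨ w ∈ supp A) : s(v, w) ∈ A ∪ B ↔ s(v, w) ∈ A := by
  refine ⟨fun h' => h'.resolve_right fun hB' => ?_, Or.inl⟩
  rcases h with h | h
  exacts [hB.supp_subset_of_restrict (left_mem_supp hB') h,
    hB.supp_subset_of_restrict (right_mem_supp hB') h]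

end Matching

section FirstIndex

variable {p : ℕ → Prop} {i k : ℕ}

open Classical in
noncomputable def firstIndex (p : ℕ → Prop) : ℕ∞ :=
  if h : ∃ i, p i then (Nat.find h : ℕ∞) else ⊤

lemma firstIndex_le (h : p i) : firstIndex p ≤ i := by
  classical
  rw [firstIndex, dif_pos ⟨i, h⟩]
  exact_mod_cast Nat.find_min' _ h

lemma not_of_lt_firstIndex (h : (i : ℕ∞) < firstIndex p) : ¬ p i :=
  fun hp => (firstIndex_le hp).not_gt h

lemma of_firstIndex_eq (h : firstIndex p = k) : p k := by
  classical
  rw [firstIndex] at h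
  split_ifs at h with hex
  · rw [← Nat.cast_inj.mp h]
    exact Nat.find_spec hex
  · exact (ENat.top_ne_natCast k h).elim

lemma le_firstIndex (h : ∀ i < k, ¬ p i) : (k : ℕ∞) ≤ firstIndex p := by
  by_contra hlt
  obtain ⟨i, hi⟩ := ENat.ne_top_iff_exists.mp (ne_top_of_lt (not_le.mp hlt))
  rw [← hi, Nat.cast_le, not_le] at hlt
  exact h i hlt (of_firstIndex_eq hi.symm)

end FirstIndex

section AugmentingPath

variable {G H : SimpleGraph V} {M : Set (Sym2 V)} {n : ℕ∞} {f : ℕ → V} {s : V} {i j : ℕ}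

def HasProperAugmentingPath (G : SimpleGraph V) (M : Set (Sym2 V)) : Prop :=
  ∃ (s : V) (n : ℕ∞) (f : ℕ → V), IsAugmentingPath G M n f s ∧ IsProper M n f

lemma natCast_succ_add_one (i : ℕ) : ((i + 1 : ℕ) : ℕ∞) + 1 = (i : ℕ∞) + 2 := by
  push_cast; ring

lemma natCast_add_one_lt_of_succ (h : ((i + 1 : ℕ) : ℕ∞) + 1 < n) : (i : ℕ∞) + 1 < n :=
  lt_of_le_of_lt (by gcongr; exact_mod_cast i.le_succ) h

lemma IsPath.shift (hP : IsPath G n f) {a : ℕ} {e : ℕ∞}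
    (hlt : ∀ i : ℕ, (i : ℕ∞) ≤ e → ((a + i : ℕ) : ℕ∞) < n) :
    IsPath G (e + 1) fun i => f (a + i) := by
  refine ⟨le_add_self, fun i j hi hj heq => ?_, fun i hi => ?_⟩
  · have := hP.2.1 (a + i) (a + j) (hlt i (ENat.natCast_lt_add_one_iff.mp hi))
      (hlt j (ENat.natCast_lt_add_one_iff.mp hj)) heq
    omega
  · rw [ENat.add_lt_add_iff_right ENat.one_ne_top] at hi
    exact hP.2.2 (a + i) (by exact_mod_cast hlt (i + 1) (Order.add_one_le_of_lt hi))

lemma IsAugmentingPath.mem_iff_odd (h : IsAugmentingPath G M n f s) :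
    ∀ {i : ℕ}, (i : ℕ∞) + 1 < n → (s(f i, f (i + 1)) ∈ M ↔ Odd i)
  | 0, _ => iff_of_false (fun hM => h.2.2.2.2.1 (h.2.2.2.1 ▸ left_mem_supp hM)) (by simp)
  | i + 1, hi => by
    rw [Nat.odd_add_one, ← h.mem_iff_odd (natCast_add_one_lt_of_succ hi),
      h.2.1 i (natCast_succ_add_one i ▸ hi), not_not]

lemma IsAugmentingPath.succ_lt (h : IsAugmentingPath G M n f s) (hj : (j : ℕ∞) < n)
    (hmem : f j ∈ supp M) : (j : ℕ∞) + 1 < n :=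
  lt_of_le_of_ne (Order.add_one_le_of_lt hj) fun hn => h.2.2.2.2.2 j hn.symm hmem

lemma IsAugmentingPath.exists_mem_edge (h : IsAugmentingPath G M n f s) (hj : (j : ℕ∞) < n)
    (hmem : f j ∈ supp M) :
    ∃ i : ℕ, (i : ℕ∞) + 1 < n ∧ (j = i ∨ j = i + 1) ∧ s(f i, f (i + 1)) ∈ M := by
  rcases Nat.even_or_odd j with hje | hjo
  · obtain ⟨i, rfl⟩ : ∃ i, j = i + 1 := Nat.exists_eq_add_one.mpr <| Nat.pos_of_ne_zero
      fun hj0 => h.2.2.2.2.1 (h.2.2.2.1 ▸ hj0 ▸ hmem)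
    have hi : (i : ℕ∞) + 1 < n := by exact_mod_cast hj
    have hio : Odd i := Nat.not_even_iff_odd.mp (Nat.even_add_one.mp hje)
    exact ⟨i, hi, Or.inr rfl, (h.mem_iff_odd hi).mpr hio⟩
  · have hj' := h.succ_lt hj hmem
    exact ⟨j, hj', Or.inl rfl, (h.mem_iff_odd hj').mpr hjo⟩

lemma IsAugmentingPath.two_lt (h : IsAugmentingPath G M n f s) (hp : IsProper M n f) : 2 < n := by
  obtain ⟨i, hi, hiM⟩ := hp
  have := ((h.mem_iff_odd hi).mp hiM).pos
  exact lt_of_le_of_lt (by norm_cast; omega) hi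

lemma IsAugmentingPath.mem_supp_one (h : IsAugmentingPath G M n f s) (hp : IsProper M n f) :
    f 1 ∈ supp M := by
  have h2 : ((1 : ℕ) : ℕ∞) + 1 < n := by simpa [one_add_one_eq_two] using h.two_lt hp
  exact left_mem_supp ((h.mem_iff_odd h2).mpr odd_one)

lemma hasProperAugmentingPath_of_parity (hP : IsPath H n f) (hn : 2 < n)
    (hpar : ∀ i : ℕ, (i : ℕ∞) + 1 < n → (s(f i, f (i + 1)) ∈ M ↔ Odd i))
    (h0 : f 0 ∉ supp M) (hend : ∀ k : ℕ, n = k + 1 → f k ∉ supp M) :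
    HasProperAugmentingPath H M := by
  have h2 : ((1 : ℕ) : ℕ∞) + 1 < n := by simpa [one_add_one_eq_two] using hn
  refine ⟨f 0, n, f, ⟨hP, fun i hi => ?_, lt_trans (by norm_num) hn, rfl, h0, hend⟩,
    1, h2, (hpar 1 h2).mpr odd_one⟩
  rw [hpar i (natCast_add_one_lt_of_succ (natCast_succ_add_one i ▸ hi)),
    hpar (i + 1) (natCast_succ_add_one i ▸ hi), Nat.odd_add_one, not_not]

end AugmentingPath

section Augment

variable {G : SimpleGraph V} {M : Set (Sym2 V)} {n : ℕ∞} {f : ℕ → V} {s v : V} {e : Sym2 V}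
  {i j : ℕ}

def pathEdges (n : ℕ∞) (f : ℕ → V) : Set (Sym2 V) :=
  {e | ∃ i : ℕ, (i : ℕ∞) + 1 < n ∧ s(f i, f (i + 1)) = e}

/-- For an `M`-augmenting path `f` this is the symmetric difference of `M` and the edges of the
path, since the `M`-edges of the path are exactly its odd ones. -/
def augment (M : Set (Sym2 V)) (n : ℕ∞) (f : ℕ → V) : Set (Sym2 V) :=
  M \ pathEdges n f ∪ {e | ∃ i : ℕ, (i : ℕ∞) + 1 < n ∧ Even i ∧ s(f i, f (i + 1)) = e}

lemma exists_index_of_mem_edge (hi : (i : ℕ∞) + 1 < n) (hv : v ∈ s(f i, f (i + 1))) :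
    ∃ j : ℕ, (j : ℕ∞) < n ∧ (j = i ∨ j = i + 1) ∧ f j = v := by
  rcases Sym2.mem_iff.mp hv with rfl | rfl
  · exact ⟨i, lt_of_le_of_lt le_self_add hi, Or.inl rfl, rfl⟩
  · exact ⟨i + 1, by exact_mod_cast hi, Or.inr rfl, rfl⟩

lemma IsAugmentingPath.mem_pathEdges (h : IsAugmentingPath G M n f s) (hM : IsMatching G M)
    (he : e ∈ M) (hj : (j : ℕ∞) < n) (hv : f j ∈ e) : e ∈ pathEdges n f := by
  obtain ⟨i, hi, hji, hEi⟩ := h.exists_mem_edge hj ⟨e, he, hv⟩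
  refine ⟨i, hi, hM.2 (f j) _ hEi _ he ?_ hv⟩
  rcases hji with rfl | rfl <;> simp

lemma IsAugmentingPath.isMatching_augment (h : IsAugmentingPath G M n f s)
    (hM : IsMatching G M) : IsMatching G (augment M n f) := by
  refine ⟨?_, ?_⟩
  · rintro e (⟨he, -⟩ | ⟨i, hi, -, rfl⟩)
    exacts [hM.1 he, h.1.2.2 i hi]
  have mixed : ∀ e ∈ M \ pathEdges n f, ∀ i : ℕ, (i : ℕ∞) + 1 < n →
      ∀ v ∈ e, v ∉ s(f i, f (i + 1)) := by
    intro e ⟨he, hnot⟩ i hi v hve hv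
    obtain ⟨j, hj, -, rfl⟩ := exists_index_of_mem_edge hi hv
    exact hnot (h.mem_pathEdges hM he hj hve)
  rintro v e (he | ⟨i, hi, hie, rfl⟩) e' (he' | ⟨i', hi', hie', rfl⟩) hv hv'
  · exact hM.2 v e he.1 e' he'.1 hv hv'
  · exact (mixed e he i' hi' v hv hv').elim
  · exact (mixed e' he' i hi v hv' hv).elim
  obtain ⟨j, hj, hji, rfl⟩ := exists_index_of_mem_edge hi hv
  obtain ⟨j', hj', hji', hjj'⟩ := exists_index_of_mem_edge hi' hv'
  obtain rfl := h.1.2.1 j' j hj' hj hjj'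
  obtain rfl : i = i' := by
    rw [Nat.even_iff] at hie hie'
    omega
  rfl

lemma IsAugmentingPath.supp_subset_supp_augment (h : IsAugmentingPath G M n f s) :
    supp M ⊆ supp (augment M n f) := by
  intro v hv
  by_cases hon : ∃ j : ℕ, (j : ℕ∞) < n ∧ f j = v
  · obtain ⟨j, hj, rfl⟩ := hon
    rcases Nat.even_or_odd j with hje | hjo
    · exact ⟨_, Or.inr ⟨j, h.succ_lt hj hv, hje, rfl⟩, Sym2.mem_mk_left _ _⟩
    · obtain ⟨i, rfl⟩ : ∃ i, j = i + 1 := Nat.exists_eq_add_one.mpr hjo.pos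
      refine ⟨_, Or.inr ⟨i, by exact_mod_cast hj, ?_, rfl⟩, Sym2.mem_mk_right _ _⟩
      exact Nat.not_odd_iff_even.mp (Nat.odd_add_one.mp hjo)
  · obtain ⟨w, hw⟩ := mem_supp_iff.mp hv
    refine ⟨_, Or.inl ⟨hw, ?_⟩, Sym2.mem_mk_left _ _⟩
    rintro ⟨i, hi, hie⟩
    obtain ⟨j, hj, -, hjv⟩ := exists_index_of_mem_edge hi (hie ▸ Sym2.mem_mk_left v w)
    exact hon ⟨j, hj, hjv⟩

end Augment

section Walk

variable {G : SimpleGraph V} {A B M N : Set (Sym2 V)} {n : ℕ∞} {g : ℕ → V} {s x : V}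
  {i j : ℕ}

def alternate (A B : Set (Sym2 V)) (j : ℕ) : Set (Sym2 V) := if Even j then A else B

lemma alternate_of_even (hj : Even j) : alternate A B j = A := if_pos hj

lemma alternate_of_odd (hj : Odd j) : alternate A B j = B :=
  if_neg (Nat.not_even_iff_odd.mpr hj)

lemma alternate_eq_of_even_iff (h : Even i ↔ Even j) :
    alternate A B i = alternate A B j := by
  simp only [alternate, h]

lemma IsMatching.alternate (hA : IsMatching G A) (hB : IsMatching G B) (j : ℕ) :
    IsMatching G (alternate A B j) := by
  unfold PaperMatchings.alternate
  split_ifs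
  exacts [hA, hB]

lemma injective_of_alternate (hA : IsMatching G A) (hB : IsMatching G B)
    (hedge : ∀ j : ℕ, (j : ℕ∞) + 1 < n → s(g j, g (j + 1)) ∈ alternate A B j)
    (h0 : g 0 ∉ supp B) (hi : (i : ℕ∞) < n) (hj : (j : ℕ∞) < n) (heq : g i = g j) :
    i = j := by
  suffices key : ∀ k : ℕ, (k : ℕ∞) < n → ∀ j < k, g j ≠ g k by
    rcases lt_trichotomy i j with hij | rfl | hij
    exacts [(key j hj i hij heq).elim, rfl, (key i hi j hij heq.symm).elim]
  -- A repetition `g j = g (k + 1)` forces an earlier one: the edge into `g (k + 1)` and one of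
  -- the two walk edges at `g j` lie in the same matching, so they share their other endpoint.
  intro k
  induction k with
  | zero => intro _ j hj; omega
  | succ k ih =>
    intro hk j hjk heq
    have hek := hedge k (by exact_mod_cast hk)
    have hX := hA.alternate hB k
    by_cases hpar : Even j ↔ Even k
    · rcases Nat.lt_succ_iff_lt_or_eq.mp hjk with hjk | rfl
      · have hej := hedge j (lt_of_le_of_lt (by exact_mod_cast Nat.succ_le_succ hjk.le) hk)
        rw [alternate_eq_of_even_iff hpar] at hej
        have hek' : s(g j, g k) ∈ alternate A B k := by rwa [heq, Sym2.eq_swap]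
        have hj1 : g (j + 1) = g k := hX.eq_of_mem hej hek'
        refine ih (lt_of_le_of_lt (by exact_mod_cast k.le_succ) hk) (j + 1) ?_ hj1
        rw [Nat.even_iff, Nat.even_iff] at hpar
        omega
      · exact (hX.adj hek).ne heq
    · rcases j with _ | j
      · have hko : Odd k := Nat.not_even_iff_odd.mp fun hk => hpar (iff_of_true Even.zero hk)
        rw [alternate_of_odd hko] at hek
        exact h0 (heq ▸ right_mem_supp hek)
      · have hej := hedge j (lt_of_le_of_lt (by exact_mod_cast hjk.le) hk)
        rw [Nat.even_add_one, not_iff, not_not] at hpar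
        rw [alternate_eq_of_even_iff hpar, Sym2.eq_swap] at hej
        have hek' : s(g (j + 1), g k) ∈ alternate A B k := by rwa [heq, Sym2.eq_swap]
        exact ih (lt_of_le_of_lt (by exact_mod_cast k.le_succ) hk) j (by omega)
          (hX.eq_of_mem hej hek')

lemma mem_iff_odd_of_alternate (hN : IsMatching G N) (hM : IsMatching G M)
    (hedge : ∀ j : ℕ, (j : ℕ∞) + 1 < n → s(g j, g (j + 1)) ∈ alternate N M j)
    (h0 : g 0 ∉ supp M) (hj : (j : ℕ∞) + 1 < n) : s(g j, g (j + 1)) ∈ M ↔ Odd j := by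
  refine ⟨fun hjM => Nat.not_even_iff_odd.mp fun hje => ?_, fun hjo => ?_⟩
  · rcases j with _ | i
    · exact h0 (left_mem_supp hjM)
    have hio : Odd i := Nat.not_even_iff_odd.mp (Nat.even_add_one.mp hje)
    have hiM := hedge i (natCast_add_one_lt_of_succ hj)
    rw [alternate_of_odd hio, Sym2.eq_swap] at hiM
    have hi2 : ((i + 2 : ℕ) : ℕ∞) < n := by exact_mod_cast hj
    have := injective_of_alternate hN hM hedge h0 (lt_of_le_of_lt (by simp) hi2) hi2
      (hM.eq_of_mem hiM hjM)
    omega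
  · simpa only [alternate_of_odd hjo] using hedge j hj

noncomputable def alternatingWalk (A B : Set (Sym2 V)) (s : V) : ℕ → V
  | 0 => s
  | j + 1 => partner (alternate A B j) (alternatingWalk A B s j)

/-- The walk can only get stuck after an `N`-edge, at a vertex unmatched by `M`, because
`supp M ⊆ supp N`. -/
lemma alternatingWalk_mem_alternate (hsupp : supp M ⊆ supp N) (hs : s ∈ supp N)
    (hj : (j : ℕ∞) < firstIndex fun j => Odd j ∧ alternatingWalk N M s j ∉ supp M) :
    s(alternatingWalk N M s j, alternatingWalk N M s (j + 1)) ∈ alternate N M j := by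
  have hmatched : ∀ i : ℕ, (i : ℕ∞) ≤ j → Odd i →
      alternatingWalk N M s i ∈ supp M :=
    fun i hi hio => not_not.mp fun hout =>
      not_of_lt_firstIndex (lt_of_le_of_lt hi hj) ⟨hio, hout⟩
  refine partner_mem ?_
  rcases Nat.even_or_odd j with hje | hjo
  · rw [alternate_of_even hje]
    rcases j with _ | i
    · exact hs
    have hio : Odd i := Nat.not_even_iff_odd.mp (Nat.even_add_one.mp hje)
    have hstep : alternatingWalk N M s (i + 1) = partner M (alternatingWalk N M s i) := by
      simp only [alternatingWalk, alternate_of_odd hio]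
    exact hsupp (hstep ▸ right_mem_supp (partner_mem (hmatched i (by simp) hio)))
  · rw [alternate_of_odd hjo]
    exact hmatched j le_rfl hjo

lemma hasProperAugmentingPath_of_supp_subset (hN : IsMatching G N) (hM : IsMatching G M)
    (hsupp : supp M ⊆ supp N) (hs : s ∉ supp M) (hx : s(s, x) ∈ N) (hxM : x ∈ supp M) :
    HasProperAugmentingPath G M := by
  set g := alternatingWalk N M s
  set m := firstIndex fun j => Odd j ∧ g j ∉ supp M
  have hlt : ∀ j : ℕ, (j : ℕ∞) + 1 < m + 1 ↔ (j : ℕ∞) < m := fun j =>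
    ENat.add_lt_add_iff_right ENat.one_ne_top
  have hedge : ∀ j : ℕ, (j : ℕ∞) + 1 < m + 1 → s(g j, g (j + 1)) ∈ alternate N M j :=
    fun j hj => alternatingWalk_mem_alternate hsupp (left_mem_supp hx) ((hlt j).mp hj)
  have hg1 : g 1 = x := by
    simpa only [g, alternatingWalk, alternate_of_even Even.zero] using hN.partner_eq hx
  have hm : ((2 : ℕ) : ℕ∞) ≤ m := by
    refine le_firstIndex fun j hj ⟨hjo, hout⟩ => ?_
    obtain rfl : j = 1 := by rcases hjo with ⟨r, rfl⟩; omega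
    exact hout (hg1 ▸ hxM)
  refine hasProperAugmentingPath_of_parity (n := m + 1)
    ⟨le_add_self, fun i j => injective_of_alternate hN hM hedge hs,
      fun j hj => (hN.alternate hM j).adj (hedge j hj)⟩
    ((ENat.lt_add_one_iff' (by simp)).mpr (by simpa using hm))
    (fun j => mem_iff_odd_of_alternate hN hM hedge hs) hs fun k hk => ?_
  exact (of_firstIndex_eq (ENat.add_left_injective_of_ne_top ENat.one_ne_top hk)).2

end Walk

section Union

variable {G : SimpleGraph V} {M M' M1 M2 : Set (Sym2 V)} {n : ℕ∞} {f : ℕ → V} {s : V}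
  {k : ℕ}

lemma HasProperAugmentingPath.of_supp_eq (hM : IsMatching G M) (hM' : IsMatching G M')
    (hsupp : supp M' = supp M) (h : HasProperAugmentingPath G M) :
    HasProperAugmentingPath G M' := by
  obtain ⟨s, n, f, hP, hp⟩ := h
  have hstart : s(s, f 1) ∈ augment M n f :=
    Or.inr ⟨0, by simpa using hP.2.2.1, Even.zero, by rw [hP.2.2.2.1]⟩
  exact hasProperAugmentingPath_of_supp_subset (hP.isMatching_augment hM) hM'
    (hsupp ▸ hP.supp_subset_supp_augment) (hsupp ▸ hP.2.2.2.2.1) hstart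
    (hsupp ▸ hP.mem_supp_one hp)

lemma IsAugmentingPath.hasProperAugmentingPath_restrict
    (h : IsAugmentingPath G (M1 ∪ M2) n f s) (hp : IsProper (M1 ∪ M2) n f)
    (hout : ∀ j : ℕ, (j : ℕ∞) < n → f j ∉ supp M1) :
    HasProperAugmentingPath (restrict G (supp M1)ᶜ) M2 := by
  have hsub : supp M2 ⊆ supp (M1 ∪ M2) := supp_mono Set.subset_union_right
  have hedge : ∀ i : ℕ, (i : ℕ∞) + 1 < n →
      (s(f i, f (i + 1)) ∈ M2 ↔ s(f i, f (i + 1)) ∈ M1 ∪ M2) := fun i hi =>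
    ⟨Or.inr, fun hi' => hi'.resolve_left fun hi1 =>
      hout i (lt_of_le_of_lt le_self_add hi) (left_mem_supp hi1)⟩
  refine hasProperAugmentingPath_of_parity ⟨h.1.1, h.1.2.1, fun j hj => ⟨h.1.2.2 j hj,
      hout j (lt_of_le_of_lt le_self_add hj), hout (j + 1) (by exact_mod_cast hj)⟩⟩
    (h.two_lt hp) (fun i hi => (hedge i hi).trans (h.mem_iff_odd hi))
    (h.2.2.2.1 ▸ fun h0 => h.2.2.2.2.1 (hsub h0)) fun k hk hk' => h.2.2.2.2.2 k hk (hsub hk')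

lemma IsAugmentingPath.exists_even_entry (hM2 : IsMatching (restrict G (supp M1)ᶜ) M2)
    (h : IsAugmentingPath G (M1 ∪ M2) n f s) (hk : (k : ℕ∞) < n) (hkM : f k ∈ supp M1) :
    ∃ a : ℕ, Even a ∧ ((a + 1 : ℕ) : ℕ∞) < n ∧ f a ∉ supp M1 ∧
      f (a + 1) ∈ supp M1 := by
  classical
  have hex : ∃ k : ℕ, (k : ℕ∞) < n ∧ f k ∈ supp M1 := ⟨k, hk, hkM⟩
  obtain ⟨hkn, hkM1⟩ := Nat.find_spec hex
  obtain ⟨a, ha⟩ : ∃ a, Nat.find hex = a + 1 := Nat.exists_eq_add_one.mpr <|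
    Nat.pos_of_ne_zero fun h0 =>
      h.2.2.2.2.1 (supp_mono Set.subset_union_left (h.2.2.2.1 ▸ h0 ▸ hkM1))
  rw [ha] at hkn hkM1
  have hga : f a ∉ supp M1 := fun hm =>
    Nat.find_min hex (by omega) ⟨lt_of_le_of_lt (by simp) hkn, hm⟩
  refine ⟨a, Nat.not_odd_iff_even.mp fun hao => hga ?_, hkn, hga, hkM1⟩
  have := (h.mem_iff_odd (by exact_mod_cast hkn)).mpr hao
  exact left_mem_supp ((mk_mem_union_iff hM2 (Or.inr hkM1)).mp this)

lemma IsAugmentingPath.hasProperAugmentingPath_of_mem_supp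
    (hM2 : IsMatching (restrict G (supp M1)ᶜ) M2) (h : IsAugmentingPath G (M1 ∪ M2) n f s)
    (hk : (k : ℕ∞) < n) (hkM : f k ∈ supp M1) : HasProperAugmentingPath G M1 := by
  obtain ⟨a, hae, ha1, hga, hga1⟩ := h.exists_even_entry hM2 hk hkM
  -- `a + e` is the first vertex after `a` outside `supp M1`, so every edge between `a` and
  -- `a + e` meets `supp M1`, and it lies in `M1` iff it lies in `M1 ∪ M2`.
  set e := firstIndex fun i => 0 < i ∧ f (a + i) ∉ supp M1
  have hin : ∀ i : ℕ, (i : ℕ∞) < e → 0 < i → f (a + i) ∈ supp M1 := fun i hi hi0 =>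
    not_not.mp fun hout => not_of_lt_firstIndex hi ⟨hi0, hout⟩
  have hlt : ∀ i : ℕ, (i : ℕ∞) ≤ e → ((a + i : ℕ) : ℕ∞) < n := by
    intro i hi
    induction i with
    | zero => exact lt_of_le_of_lt (by simp) ha1
    | succ i ih =>
      have hi' : (i : ℕ∞) < e := lt_of_lt_of_le (by exact_mod_cast i.lt_succ_self) hi
      rcases i with _ | i
      · exact ha1
      exact_mod_cast h.succ_lt (ih hi'.le)
        (supp_mono Set.subset_union_left (hin (i + 1) hi' i.succ_pos))
  have he : ((2 : ℕ) : ℕ∞) ≤ e := by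
    refine le_firstIndex fun i hi ⟨hi0, hout⟩ => hout ?_
    obtain rfl : i = 1 := by omega
    exact hga1
  have hpar : ∀ i : ℕ, (i : ℕ∞) + 1 < e + 1 →
      (s(f (a + i), f (a + i + 1)) ∈ M1 ↔ Odd i) := by
    intro i hi
    rw [ENat.add_lt_add_iff_right ENat.one_ne_top] at hi
    have htouch : f (a + i) ∈ supp M1 ∨ f (a + i + 1) ∈ supp M1 := by
      rcases i with _ | i
      exacts [Or.inr hga1, Or.inl (hin (i + 1) hi i.succ_pos)]
    rw [← mk_mem_union_iff hM2 htouch,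
      h.mem_iff_odd (by exact_mod_cast hlt (i + 1) (Order.add_one_le_of_lt hi))]
    rw [Nat.even_iff] at hae
    rw [Nat.odd_iff, Nat.odd_iff]
    omega
  refine hasProperAugmentingPath_of_parity (h.1.shift hlt)
    ((ENat.lt_add_one_iff' (by simp)).mpr (by simpa using he)) hpar hga fun k hk => ?_
  exact (of_firstIndex_eq (ENat.add_left_injective_of_ne_top ENat.one_ne_top hk)).2

lemma HasProperAugmentingPath.of_union (hM2 : IsMatching (restrict G (supp M1)ᶜ) M2)
    (h : HasProperAugmentingPath G (M1 ∪ M2)) :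
    HasProperAugmentingPath G M1 ∨ HasProperAugmentingPath (restrict G (supp M1)ᶜ) M2 := by
  obtain ⟨s, n, f, hP, hp⟩ := h
  by_cases hmeet : ∃ k : ℕ, (k : ℕ∞) < n ∧ f k ∈ supp M1
  · obtain ⟨k, hk, hkM⟩ := hmeet
    exact Or.inl (hP.hasProperAugmentingPath_of_mem_supp hM2 hk hkM)
  · push Not at hmeet
    exact Or.inr (hP.hasProperAugmentingPath_restrict hp hmeet)

end Union

theorem indepSubgraph_union_of_indep_in_complement_general {V : Type*}
    (G : SimpleGraph V) (I1 I2 : Set V)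
    (h1 : IndepSubgraph G I1) (h2 : IndepSubgraph (restrict G I1ᶜ) I2) :
    IndepSubgraph G (I1 ∪ I2) := by
  obtain ⟨⟨M1, hM1, rfl⟩, hind1⟩ := h1
  obtain ⟨⟨M2, hM2, rfl⟩, hind2⟩ := h2
  have hM := hM1.union_of_restrict hM2
  refine ⟨⟨M1 ∪ M2, hM, supp_union⟩, fun M hM' hsupp => ⟨hM', fun hP => ?_⟩⟩
  rcases (HasProperAugmentingPath.of_supp_eq hM' hM (supp_union.trans hsupp.symm) hP).of_union
    hM2 with h | h
  · exact (hind1 M1 hM1 rfl).2 h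
  · exact (hind2 M2 hM2 rfl).2 h

/-- If `I1` is an independent subgraph of `G` and `I2` (disjoint from `I1`)
is an independent subgraph of `G[V \ I1]`, then `I1 ∪ I2` is an independent subgraph
of `G`. -/
theorem indepSubgraph_union_of_indep_in_complement {V : Type*} [Countable V]
    (G : SimpleGraph V) (I1 I2 : Set V) (hdisj : Disjoint I1 I2)
    (h1 : IndepSubgraph G I1) (h2 : IndepSubgraph (restrict G I1ᶜ) I2) :
    IndepSubgraph G (I1 ∪ I2) :=
  indepSubgraph_union_of_indep_in_complement_general G I1 I2 h1 h2

end PaperMatchings
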